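/- The ES-KES-LM flux is entropy stable: for all admissible states q⁻, q⁺, every admissible intermediate state q_int, and every M_cut ∈ [0,1], the flux F^{ES-KES-LM}(q⁻, q⁺) := F*(q⁻, q⁺) − ½ Q^KES_LM(q_int)(r(q⁺) − r(q⁻)) with Q^KES_LM(q_int) := R |Λ|^KES_LM S Rᵀ evaluated at q_int and |Λ|^KES_LM := diag(|u|+c̃, |u|, |u|, |u|+c̃), where c̃ := c · max(min(M, 1), M_cut) and M := √(u²+v²)/c, satisfies (r(q⁺) − r(q⁻)) · F^{ES-KES-LM}(q⁻, q⁺) ≤ ρ⁺u⁺ − ρ⁻u⁻; moreover the first and fourth diagonal entries of |Λ|^KES_LM are equal. -/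
import Mathlib


open Real Matrix

noncomputable section

/-- A state of the 2D compressible Euler equations: `(ρ, ρu, ρv, E)`. -/
abbrev EulerState := Fin 4 → ℝ

/-- Density. -/
def rho (q : EulerState) : ℝ := q 0
/-- x-momentum. -/
def mom1 (q : EulerState) : ℝ := q 1
/-- y-momentum. -/
def mom2 (q : EulerState) : ℝ := q 2
/-- Total energy. -/
def toten (q : EulerState) : ℝ := q 3
/-- Pressure `p = (γ-1)(E - (m₁² + m₂²)/(2ρ))`. -/
def pres (γ : ℝ) (q : EulerState) : ℝ :=
  (γ - 1) * (toten q - (mom1 q ^ 2 + mom2 q ^ 2) / (2 * rho q))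
/-- x-velocity `u = m₁/ρ`. -/
def uvel (q : EulerState) : ℝ := mom1 q / rho q
/-- y-velocity `v = m₂/ρ`. -/
def vvel (q : EulerState) : ℝ := mom2 q / rho q
/-- Admissible states: positive density and positive pressure. -/
def admissible (γ : ℝ) (q : EulerState) : Prop := 0 < rho q ∧ 0 < pres γ q
/-- Physical entropy `s = ln(p ρ^(-γ))`. -/
def entS (γ : ℝ) (q : EulerState) : ℝ := Real.log (pres γ q * rho q ^ (-γ))
/-- Entropy function `U = -ρ s/(γ-1)`. -/
def entU (γ : ℝ) (q : EulerState) : ℝ := -(rho q * entS γ q) / (γ - 1)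
/-- `β = ρ/(2p)`. -/
def betaCoef (γ : ℝ) (q : EulerState) : ℝ := rho q / (2 * pres γ q)
/-- Entropy variables `r(q)`. -/
def entVar (γ : ℝ) (q : EulerState) : EulerState :=
  ![(γ - entS γ q) / (γ - 1) - betaCoef γ q * (uvel q ^ 2 + vvel q ^ 2),
    2 * betaCoef γ q * uvel q,
    2 * betaCoef γ q * vvel q,
    -2 * betaCoef γ q]
/-- x-flux `f(q)`. -/
def fFlux (γ : ℝ) (q : EulerState) : EulerState :=
  ![rho q * uvel q,
    rho q * uvel q ^ 2 + pres γ q,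
    rho q * uvel q * vvel q,
    (toten q + pres γ q) * uvel q]
/-- y-flux `g(q)`. -/
def gFlux (γ : ℝ) (q : EulerState) : EulerState :=
  ![rho q * vvel q,
    rho q * uvel q * vvel q,
    rho q * vvel q ^ 2 + pres γ q,
    (toten q + pres γ q) * vvel q]
/-- x-entropy flux `φₓ = -ρ u s/(γ-1)`. -/
def phiX (γ : ℝ) (q : EulerState) : ℝ := -(rho q * uvel q * entS γ q) / (γ - 1)
/-- y-entropy flux `φ_y = -ρ v s/(γ-1)`. -/
def phiY (γ : ℝ) (q : EulerState) : ℝ := -(rho q * vvel q * entS γ q) / (γ - 1)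

/-- Logarithmic mean `(b-a)/(ln b - ln a)`, equal to `a` when `a = b`. -/
def logMean (a b : ℝ) : ℝ := if a = b then a else (b - a) / (Real.log b - Real.log a)

/-- The entropy conservative flux of Chandrashekar. -/
def chandrashekarFlux (γ : ℝ) (qm qp : EulerState) : EulerState :=
  let ρhat := logMean (rho qm) (rho qp)
  let ubar := (uvel qm + uvel qp) / 2
  let vbar := (vvel qm + vvel qp) / 2
  let βbar := (betaCoef γ qm + betaCoef γ qp) / 2
  let βhat := logMean (betaCoef γ qm) (betaCoef γ qp)
  let ρbar := (rho qm + rho qp) / 2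
  let ptil := ρbar / (2 * βbar)
  let vsqbar := (uvel qm ^ 2 + vvel qm ^ 2 + uvel qp ^ 2 + vvel qp ^ 2) / 2
  let Fρ := ρhat * ubar
  let Fρu := ubar * Fρ + ptil
  let Fρv := vbar * Fρ
  ![Fρ, Fρu, Fρv,
    (1 / (2 * (γ - 1) * βhat) - vsqbar / 2) * Fρ + ubar * Fρu + vbar * Fρv]

/-- Speed of sound `c = √(γ p/ρ)`. -/
def cSound (γ : ℝ) (q : EulerState) : ℝ := Real.sqrt (γ * pres γ q / rho q)
/-- Enthalpy `H = c²/(γ-1) + |v|²/2`. -/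
def enthalpyH (γ : ℝ) (q : EulerState) : ℝ :=
  cSound γ q ^ 2 / (γ - 1) + (uvel q ^ 2 + vvel q ^ 2) / 2
/-- The matrix `R` of right eigenvectors of the x-flux Jacobian. -/
def eigMat (γ : ℝ) (q : EulerState) : Matrix (Fin 4) (Fin 4) ℝ :=
  !![1, 1, 0, 1;
     uvel q - cSound γ q, uvel q, 0, uvel q + cSound γ q;
     vvel q, vvel q, -1, vvel q;
     enthalpyH γ q - cSound γ q * uvel q, (uvel q ^ 2 + vvel q ^ 2) / 2, -vvel q,
       enthalpyH γ q + cSound γ q * uvel q]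
/-- Barth's scaling matrix `S = diag(ρ/(2γ), (γ-1)ρ/γ, p, ρ/(2γ))`. -/
def scalMat (γ : ℝ) (q : EulerState) : Matrix (Fin 4) (Fin 4) ℝ :=
  Matrix.diagonal ![rho q / (2 * γ), (γ - 1) * rho q / γ, pres γ q, rho q / (2 * γ)]

/-- Entropy diffusion matrix `Q = R |Λ| S Rᵀ` for a diagonal `|Λ| = diag lam`. -/
def Qmat (γ : ℝ) (lam : Fin 4 → ℝ) (q : EulerState) : Matrix (Fin 4) (Fin 4) ℝ :=
  eigMat γ q * Matrix.diagonal lam * scalMat γ q * (eigMat γ q)ᵀ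

/-- Roe eigenvalues `(|u-c|, |u|, |u|, |u+c|)`. -/
def lamRoe (γ : ℝ) (q : EulerState) : Fin 4 → ℝ :=
  ![|uvel q - cSound γ q|, |uvel q|, |uvel q|, |uvel q + cSound γ q|]
/-- Kinetic energy stable eigenvalues `(|u|+c, |u|, |u|, |u|+c)`. -/
def lamKES (γ : ℝ) (q : EulerState) : Fin 4 → ℝ :=
  ![|uvel q| + cSound γ q, |uvel q|, |uvel q|, |uvel q| + cSound γ q]
/-- Local Mach number `M = |v|/c`. -/
def machNum (γ : ℝ) (q : EulerState) : ℝ :=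
  Real.sqrt (uvel q ^ 2 + vvel q ^ 2) / cSound γ q
/-- Rescaled speed of sound `c̃ = c max(min(M,1), M_cut)`. -/
def cTilde (γ Mcut : ℝ) (q : EulerState) : ℝ :=
  cSound γ q * max (min (machNum γ q) 1) Mcut
/-- Low Mach Roe eigenvalues `(|u-c̃|, |u|, |u|, |u+c̃|)`. -/
def lamRoeLM (γ Mcut : ℝ) (q : EulerState) : Fin 4 → ℝ :=
  ![|uvel q - cTilde γ Mcut q|, |uvel q|, |uvel q|, |uvel q + cTilde γ Mcut q|]
/-- Low Mach KES eigenvalues `(|u|+c̃, |u|, |u|, |u|+c̃)`. -/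
def lamKESLM (γ Mcut : ℝ) (q : EulerState) : Fin 4 → ℝ :=
  ![|uvel q| + cTilde γ Mcut q, |uvel q|, |uvel q|, |uvel q| + cTilde γ Mcut q]


section AuxLemmas

lemma logMean_pos {a b : ℝ} (ha : 0 < a) (hb : 0 < b) : 0 < logMean a b := by
  unfold logMean
  split_ifs with h
  · exact ha
  · rcases lt_or_gt_of_ne h with h' | h'
    · exact div_pos (by linarith) (by have := Real.log_lt_log ha h'; linarith)
    · have h1 : Real.log b < Real.log a := Real.log_lt_log hb h'
      rw [div_pos_iff]; right; constructor <;> linarith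

lemma logMean_mul {a b : ℝ} (ha : 0 < a) (hb : 0 < b) :
    logMean a b * (Real.log b - Real.log a) = b - a := by
  unfold logMean
  split_ifs with h
  · subst h; ring
  · have : Real.log b - Real.log a ≠ 0 := by
      rcases lt_or_gt_of_ne h with h' | h'
      · have := Real.log_lt_log ha h'; intro hc; linarith
      · have := Real.log_lt_log hb h'; intro hc; linarith
    field_simp

lemma quad_nonneg (e : Fin 4 → ℝ) (he : ∀ i, 0 ≤ e i) (R : Matrix (Fin 4) (Fin 4) ℝ)
    (x : Fin 4 → ℝ) : 0 ≤ x ⬝ᵥ (R * Matrix.diagonal e * Rᵀ).mulVec x := by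
  have key : x ⬝ᵥ (R * Matrix.diagonal e * Rᵀ).mulVec x
      = ∑ i : Fin 4, e i * (∑ j : Fin 4, R j i * x j) ^ 2 := by
    simp [Matrix.mul_apply, Matrix.mulVec, dotProduct, Matrix.diagonal,
      Fin.sum_univ_four]
    ring
  rw [key]
  exact Finset.sum_nonneg fun i _ => mul_nonneg (he i) (sq_nonneg _)

lemma Q_nonneg (γ : ℝ) (hγ : 1 < γ) (lam : Fin 4 → ℝ) (hlam : ∀ i, 0 ≤ lam i)
    (q : EulerState) (hq : admissible γ q) (x : Fin 4 → ℝ) :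
    0 ≤ x ⬝ᵥ (Qmat γ lam q).mulVec x := by
  have hγ0 : (0:ℝ) < γ := lt_trans one_pos hγ
  have hρ := hq.1
  have hpr := hq.2
  have hQ : Qmat γ lam q = eigMat γ q *
      Matrix.diagonal (fun i => lam i * (![rho q / (2 * γ), (γ - 1) * rho q / γ, pres γ q, rho q / (2 * γ)] : Fin 4 → ℝ) i) * (eigMat γ q)ᵀ := by
    unfold Qmat scalMat
    rw [Matrix.mul_assoc (eigMat γ q), Matrix.diagonal_mul_diagonal]
  rw [hQ]
  apply quad_nonneg
  intro i
  apply mul_nonneg (hlam i)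
  fin_cases i <;> simp
  · positivity
  · exact div_nonneg (mul_nonneg (by linarith) hρ.le) hγ0.le
  · exact le_of_lt hpr
  · positivity

lemma ec_scalar (γ a b pm pp um up vm vp rh bh la lb lpm lpp : ℝ)
    (ha : 0 < a) (hb : 0 < b) (hpm : 0 < pm) (hpp : 0 < pp) (hγ : 1 < γ)
    (hrh : rh ≠ 0) (hbh : bh ≠ 0)
    (H1 : rh * (lb - la) = b - a)
    (H2 : bh * ((lb - lpp) - (la - lpm)) = b / (2 * pp) - a / (2 * pm)) :
    (((γ - (lpp - γ * lb)) / (γ - 1) - b / (2 * pp) * (up ^ 2 + vp ^ 2))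
      - ((γ - (lpm - γ * la)) / (γ - 1) - a / (2 * pm) * (um ^ 2 + vm ^ 2)))
        * (rh * ((um + up) / 2))
    + (2 * (b / (2 * pp)) * up - 2 * (a / (2 * pm)) * um)
        * ((um + up) / 2 * (rh * ((um + up) / 2))
            + (a + b) / 2 / (2 * ((a / (2 * pm) + b / (2 * pp)) / 2)))
    + (2 * (b / (2 * pp)) * vp - 2 * (a / (2 * pm)) * vm)
        * ((vm + vp) / 2 * (rh * ((um + up) / 2)))
    + (-(2 * (b / (2 * pp))) + 2 * (a / (2 * pm)))
        * ((1 / (2 * (γ - 1) * bh) - (um ^ 2 + vm ^ 2 + up ^ 2 + vp ^ 2) / 2 / 2)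
              * (rh * ((um + up) / 2))
            + (um + up) / 2 * ((um + up) / 2 * (rh * ((um + up) / 2))
                + (a + b) / 2 / (2 * ((a / (2 * pm) + b / (2 * pp)) / 2)))
            + (vm + vp) / 2 * ((vm + vp) / 2 * (rh * ((um + up) / 2))))
    = b * up - a * um := by
  have hγ1 : γ - 1 ≠ 0 := by linarith
  have hlb : lb = la + (b - a) / rh := by
    field_simp at H1 ⊢; linarith
  subst hlb
  have hlpp : lpp = lpm + (b - a) / rh - (b / (2 * pp) - a / (2 * pm)) / bh := by
    field_simp at H2 ⊢; linarith [H2]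
  subst hlpp
  have hden : a / (2 * pm) + b / (2 * pp) ≠ 0 := by positivity
  field_simp
  ring

lemma entS_eq (γ : ℝ) (q : EulerState) (hq : admissible γ q) :
    entS γ q = Real.log (pres γ q) - γ * Real.log (rho q) := by
  unfold entS
  rw [Real.log_mul (ne_of_gt hq.2) (ne_of_gt (Real.rpow_pos_of_pos hq.1 _)), Real.log_rpow hq.1]
  ring

lemma chandra_ec (γ : ℝ) (hγ : 1 < γ) (qm qp : EulerState)
    (hm : admissible γ qm) (hp : admissible γ qp) :
    (entVar γ qp - entVar γ qm) ⬝ᵥ chandrashekarFlux γ qm qp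
      = rho qp * uvel qp - rho qm * uvel qm := by
  have hρm := hm.1; have hρp := hp.1; have hpm := hm.2; have hpp := hp.2
  have hβm : 0 < betaCoef γ qm := div_pos hρm (by linarith)
  have hβp : 0 < betaCoef γ qp := div_pos hρp (by linarith)
  have H1 := logMean_mul hρm hρp
  have H2 := logMean_mul hβm hβp
  have hrh : logMean (rho qm) (rho qp) ≠ 0 := ne_of_gt (logMean_pos hρm hρp)
  have hbh : logMean (betaCoef γ qm) (betaCoef γ qp) ≠ 0 := ne_of_gt (logMean_pos hβm hβp)
  have e2 : Real.log (betaCoef γ qp) - Real.log (betaCoef γ qm)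
      = (Real.log (rho qp) - Real.log (pres γ qp))
        - (Real.log (rho qm) - Real.log (pres γ qm)) := by
    unfold betaCoef
    rw [Real.log_div (ne_of_gt hρp) (by positivity), Real.log_div (ne_of_gt hρm) (by positivity),
      Real.log_mul two_ne_zero (ne_of_gt hpp), Real.log_mul two_ne_zero (ne_of_gt hpm)]
    ring
  rw [e2] at H2
  simp only [betaCoef] at H2 hbh
  have hsm := entS_eq γ qm hm
  have hsp := entS_eq γ qp hp
  have key := ec_scalar γ (rho qm) (rho qp) (pres γ qm) (pres γ qp)
    (uvel qm) (uvel qp) (vvel qm) (vvel qp)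
    (logMean (rho qm) (rho qp))
    (logMean (rho qm / (2 * pres γ qm)) (rho qp / (2 * pres γ qp)))
    (Real.log (rho qm)) (Real.log (rho qp)) (Real.log (pres γ qm)) (Real.log (pres γ qp))
    hρm hρp hpm hpp hγ hrh hbh H1
    (by rw [H2])
  simp only [chandrashekarFlux, entVar, dotProduct, Fin.sum_univ_four,
    Pi.sub_apply, Matrix.cons_val_zero, Matrix.cons_val_one, Matrix.head_cons,
    Matrix.cons_val_two, Matrix.tail_cons, Matrix.cons_val_three, betaCoef]
  rw [hsm, hsp]
  linear_combination key

end AuxLemmas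

/-- the ES-KES-LM flux
`F^{ES-KES-LM} = F* − ½ Q^KES_LM(q_int)(r(q⁺) − r(q⁻))` with
`Q^KES_LM = R |Λ|^KES_LM S Rᵀ`, `|Λ|^KES_LM = diag(|u|+c̃,|u|,|u|,|u|+c̃)`,
is entropy stable; moreover the first and fourth eigenvalues are equal. -/
theorem es_kes_lm_flux_entropy_stable (γ Mcut : ℝ) (hγ : 1 < γ)
    (hMcut : Mcut ∈ Set.Icc (0 : ℝ) 1)
    (qm qp qint : EulerState) (hm : admissible γ qm) (hp : admissible γ qp)
    (hint : admissible γ qint) :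
    (entVar γ qp - entVar γ qm) ⬝ᵥ
        (chandrashekarFlux γ qm qp
          - (1 / 2 : ℝ) •
            (Qmat γ (lamKESLM γ Mcut qint) qint).mulVec (entVar γ qp - entVar γ qm))
      ≤ rho qp * uvel qp - rho qm * uvel qm ∧
    lamKESLM γ Mcut qint 0 = lamKESLM γ Mcut qint 3 := by
  constructor
  · set x := entVar γ qp - entVar γ qm with hx
    have hlam : ∀ i, 0 ≤ lamKESLM γ Mcut qint i := by
      have hc : 0 ≤ cSound γ qint := Real.sqrt_nonneg _
      have hct : 0 ≤ cTilde γ Mcut qint := by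
        unfold cTilde
        exact mul_nonneg hc (le_trans hMcut.1 (le_max_right _ _))
      intro i
      fin_cases i <;> simp [lamKESLM] <;> positivity
    have hQ := Q_nonneg γ hγ (lamKESLM γ Mcut qint) hlam qint hint x
    have hec := chandra_ec γ hγ qm qp hm hp
    rw [dotProduct_sub, dotProduct_smul, hec]
    have : (0:ℝ) ≤ (1/2 : ℝ) * (x ⬝ᵥ (Qmat γ (lamKESLM γ Mcut qint) qint).mulVec x) :=
      mul_nonneg (by norm_num) hQ
    simp only [smul_eq_mul]
    linarith
  · simp [lamKESLM]
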